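/- Let E be the real symmetric matrix with rows ((2,1,1),(1,2,1),(1,1,2)) (a matrix in the interior of the cone σ_{C₄} spanned by the quadratic forms x₁², x₂², x₃², (x₁+x₂+x₃)²). Fix a complex symmetric 3×3 matrix R and set τ(y) := iyE + R; then τ(y) ∈ ℍ₃ for all sufficiently large y > 0. Set S̃₁ := e^{πi(R₁₂ − R₂₃)} and S̃₂ := e^{πi(R₁₃ − R₂₃)}. Then the limit lim_{y→∞} e^{16πy} · θ_null(τ(y)) exists, and it equals zero if and only if (1 − S̃₁ − S̃₂)(S̃₂ − S̃₁ − 1)(S̃₁ − S̃₂ − 1)(S̃₁ + S̃₂ + 1) = 0. -/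

import Mathlib

open Complex Matrix

/-- The genus-`g` theta function with characteristic `[ε; δ]`. -/
noncomputable def theta (g : ℕ) (ε δ : Fin g → ℤ) (τ : Matrix (Fin g) (Fin g) ℂ)
    (z : Fin g → ℂ) : ℂ :=
  ∑' N : Fin g → ℤ,
    Complex.exp (↑Real.pi * I *
        (∑ j, ∑ k, ((N j : ℂ) + (ε j : ℂ) / 2) * τ j k * ((N k : ℂ) + (ε k : ℂ) / 2)) +
      2 * ↑Real.pi * I *
        (∑ j, ((N j : ℂ) + (ε j : ℂ) / 2) * (z j + (δ j : ℂ) / 2)))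

/-- Membership in the Siegel upper half-space. -/
def SiegelUpper (g : ℕ) (τ : Matrix (Fin g) (Fin g) ℂ) : Prop :=
  τ.IsSymm ∧ (Matrix.of fun j k => (τ j k).im : Matrix (Fin g) (Fin g) ℝ).PosDef

/-- The genus-3 theta-null: the product of all theta constants with even characteristic. -/
noncomputable def thetaNull3 (τ : Matrix (Fin 3) (Fin 3) ℂ) : ℂ :=
  ∏ c ∈ Finset.univ.filter
      (fun c : (Fin 3 → Fin 2) × (Fin 3 → Fin 2) =>
        (∑ j, (c.1 j).val * (c.2 j).val) % 2 = 0),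
    theta 3 (fun j => ((c.1 j).val : ℤ)) (fun j => ((c.2 j).val : ℤ)) τ 0

/-- The matrix generating the interior of the cone `σ_{C₄}`. -/
noncomputable def EC4 : Matrix (Fin 3) (Fin 3) ℂ := !![2, 1, 1; 1, 2, 1; 1, 1, 2]

/-- `S̃₁ = exp(πi(R₁₂ − R₂₃))`, `S̃₂ = exp(πi(R₁₃ − R₂₃))`. -/
noncomputable def St1 (R : Matrix (Fin 3) (Fin 3) ℂ) : ℂ :=
  Complex.exp (↑Real.pi * I * (R 0 1 - R 1 2))

noncomputable def St2 (R : Matrix (Fin 3) (Fin 3) ℂ) : ℂ :=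
  Complex.exp (↑Real.pi * I * (R 0 2 - R 1 2))

/-!
Write `v = N + ε/2` with `N ∈ ℤ³` and `q(v) = vᵀ E v = ∑ vⱼ² + (∑ vⱼ)²`. Along `τ = iyE + R` the
`N`-th term of `θ[ε;δ]` is `exp(-πy q(v)) · exp(πi (vᵀRv + v·δ))`, and `|Im (vᵀRv)| ≤ C ∑ vⱼ²`
gives a summable majorant for `y ≥ C + 1`. By dominated convergence, `exp(πy min q) θ[ε;δ]` then
tends to the sum of `exp(πi (vᵀRv + v·δ))` over the minimizers of `q` on `ℤ³ + ε/2`. Parity gives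
`4 q(v) ≥ |ε| + (|ε| mod 2)`, with equality only on a finite box, and these minima add up to
`4 · 16` over the 36 even characteristics.

The minimizers come in pairs `±v`, on which the summand agrees because the characteristic is even.
For `ε ≠ (1,1,1)` there is a single pair (the single point `0` when `ε = 0`), so the limit is a
nonzero multiple of an exponential. For `ε = (1,1,1)` there are three pairs, and the four even `δ`
give `2X(±S̃₁ ± S̃₂ ± 1)`, for one nonzero exponential `X`, with the sign patterns of the four
factors of the quartic.
-/

open Filter Topology
open scoped Real

theorem tendsto_exp_mul_tsum_of_forall_le {ι : Type*} {q : ι → ℝ} {m : ℝ} (a : ι → ℂ) (y₀ : ℝ)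
    (hq : ∀ i, m ≤ q i) (hsum : Summable fun i => Real.exp (-(y₀ * q i)) * ‖a i‖) :
    Tendsto (fun y : ℝ => (Real.exp (y * m) : ℂ) * ∑' i, (Real.exp (-(y * q i)) : ℂ) * a i)
      atTop (𝓝 (∑' i, if q i = m then a i else 0)) := by
  have hrw (y : ℝ) : (Real.exp (y * m) : ℂ) * ∑' i, (Real.exp (-(y * q i)) : ℂ) * a i =
      ∑' i, (Real.exp (y * (m - q i)) : ℂ) * a i := by
    rw [← tsum_mul_left]
    congr with i
    rw [← mul_assoc, ← ofReal_mul, ← Real.exp_add, mul_sub, sub_eq_add_neg]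
  simp_rw [hrw]
  refine tendsto_tsum_of_dominated_convergence (hsum.mul_left (Real.exp (y₀ * m))) (fun i => ?_) ?_
  · split_ifs with h
    · simp [h]
    · have hneg : m - q i < 0 := sub_neg.2 ((hq i).lt_of_ne (Ne.symm h))
      have h0 : Tendsto (fun y : ℝ => Real.exp (y * (m - q i))) atTop (𝓝 0) :=
        Real.tendsto_exp_atBot.comp (tendsto_id.atTop_mul_const_of_neg hneg)
      simpa using (continuous_ofReal.tendsto 0 |>.comp h0).mul_const (a i)
  · filter_upwards [eventually_ge_atTop y₀] with y hy i
    rw [norm_mul, norm_real, Real.norm_of_nonneg (Real.exp_pos _).le, ← mul_assoc,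
      ← Real.exp_add]
    gcongr
    nlinarith [hq i]

theorem summable_prod_fin {β : Type*} :
    ∀ {n : ℕ} (f : Fin n → β → ℝ), (∀ j b, 0 ≤ f j b) → (∀ j, Summable (f j)) →
      Summable fun x : Fin n → β => ∏ j, f j (x j)
  | 0, _, _, _ => .of_finite
  | n + 1, f, hf0, hf => by
    have htail := summable_prod_fin (fun j => f j.succ) (fun j => hf0 j.succ) (fun j => hf j.succ)
    have hprod := (hf 0).mul_of_nonneg htail (hf0 0) fun x => Finset.prod_nonneg fun j _ => hf0 _ _
    rw [← (Fin.consEquiv fun _ => β).summable_iff]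
    refine hprod.congr fun x => ?_
    simp [Fin.prod_univ_succ, Fin.consEquiv]

theorem summable_exp_neg_pi_mul_add_sq (c : ℝ) :
    Summable fun n : ℤ => Real.exp (-(π * (n + c) ^ 2)) := by
  have h := ((summable_jacobiTheta₂_term_iff (c * I) I).2 (by simp)).norm.mul_left
    (Real.exp (-(π * c ^ 2)))
  refine h.congr fun n => ?_
  rw [norm_jacobiTheta₂_term, ← Real.exp_add]
  congr 1
  simp only [neg_mul, I_im, mul_one, mul_im, ofReal_re, ofReal_im, I_re, mul_zero, add_zero]
  ring

theorem abs_sum_mul_mul_le {ι : Type*} [Fintype ι] (S : ι → ι → ℝ) (x : ι → ℝ) :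
    |∑ j, ∑ k, x j * S j k * x k| ≤ (∑ j, ∑ k, |S j k|) * ∑ j, x j ^ 2 := by
  have hsq (j : ι) : x j ^ 2 ≤ ∑ i, x i ^ 2 :=
    Finset.single_le_sum (f := fun i => x i ^ 2) (fun i _ => sq_nonneg _) (Finset.mem_univ j)
  rw [Finset.sum_mul]
  refine (Finset.abs_sum_le_sum_abs _ _).trans (Finset.sum_le_sum fun j _ => ?_)
  rw [Finset.sum_mul]
  refine (Finset.abs_sum_le_sum_abs _ _).trans (Finset.sum_le_sum fun k _ => ?_)
  rw [abs_mul, abs_mul, mul_right_comm, mul_comm]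
  have hxx : |x j| * |x k| ≤ ∑ i, x i ^ 2 := by
    nlinarith [hsq j, hsq k, sq_abs (x j), sq_abs (x k), sq_nonneg (|x j| - |x k|)]
  exact mul_le_mul_of_nonneg_left hxx (abs_nonneg _)

theorem mul_add_nonneg_of_zero_or_one (n e : ℤ) (he : e = 0 ∨ e = 1) : 0 ≤ n * (n + e) := by
  rcases he with rfl | rfl
  · nlinarith [sq_nonneg n]
  · rcases le_or_gt 0 n with h | h <;> nlinarith

theorem emod_two_le_sq (k : ℤ) : k % 2 ≤ k ^ 2 := by
  rcases Int.emod_two_eq_zero_or_one k with h | h <;> rw [h]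
  · positivity
  · have : k ≠ 0 := by rintro rfl; simp at h
    nlinarith [Int.one_le_abs this, sq_abs k]

namespace ThetaNullC4

section Form

variable {ι : Type*} [Fintype ι]

def formC4 (v : ι → ℝ) : ℝ := ∑ j, v j ^ 2 + (∑ j, v j) ^ 2

noncomputable def halfShift (ε N : ι → ℤ) (j : ι) : ℝ := N j + ε j / 2

def formC4Int (ε N : ι → ℤ) : ℤ := ∑ j, (2 * N j + ε j) ^ 2 + (∑ j, (2 * N j + ε j)) ^ 2

def minFormC4Int (ε : ι → ℤ) : ℤ := ∑ j, ε j + (∑ j, ε j) % 2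

theorem formC4Int_cast (ε N : ι → ℤ) : (formC4Int ε N : ℝ) = 4 * formC4 (halfShift ε N) := by
  have h (j : ι) : ((2 * N j + ε j : ℤ) : ℝ) = 2 * halfShift ε N j := by
    rw [halfShift]; push_cast; ring
  simp only [formC4Int, formC4, Int.cast_add, Int.cast_pow, Int.cast_sum, h, mul_pow,
    ← Finset.mul_sum]
  ring

theorem formC4Int_eq (ε N : ι → ℤ) (hε : ∀ j, ε j = 0 ∨ ε j = 1) :
    formC4Int ε N = minFormC4Int ε + 4 * ∑ j, N j * (N j + ε j) +
      ((∑ j, (2 * N j + ε j)) ^ 2 - (∑ j, (2 * N j + ε j)) % 2) := by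
  have hsq : ∀ j, (2 * N j + ε j) ^ 2 = ε j + 4 * (N j * (N j + ε j)) := fun j => by
    rcases hε j with h | h <;> rw [h] <;> ring
  have hpar : (∑ j, (2 * N j + ε j)) % 2 = (∑ j, ε j) % 2 := by
    rw [Finset.sum_add_distrib, ← Finset.mul_sum]
    omega
  rw [formC4Int, minFormC4Int, Finset.sum_congr rfl fun j _ => hsq j, Finset.sum_add_distrib,
    ← Finset.mul_sum, hpar]
  ring

theorem minFormC4Int_le (ε N : ι → ℤ) (hε : ∀ j, ε j = 0 ∨ ε j = 1) :
    minFormC4Int ε ≤ formC4Int ε N := by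
  have h1 : 0 ≤ ∑ j, N j * (N j + ε j) :=
    Finset.sum_nonneg fun j _ => mul_add_nonneg_of_zero_or_one _ _ (hε j)
  have h2 := emod_two_le_sq (∑ j, (2 * N j + ε j))
  rw [formC4Int_eq ε N hε]
  linarith

theorem eq_zero_or_eq_neg_one_of_formC4Int_eq (ε N : ι → ℤ) (hε : ∀ j, ε j = 0 ∨ ε j = 1)
    (h : formC4Int ε N = minFormC4Int ε) (j : ι) : N j = 0 ∨ N j = -1 := by
  have h1 : 0 ≤ ∑ j, N j * (N j + ε j) :=
    Finset.sum_nonneg fun j _ => mul_add_nonneg_of_zero_or_one _ _ (hε j)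
  have h2 := emod_two_le_sq (∑ j, (2 * N j + ε j))
  rw [formC4Int_eq ε N hε] at h
  have hsum : ∑ j, N j * (N j + ε j) = 0 := by linarith
  have hj := (Finset.sum_eq_zero_iff_of_nonneg fun j _ =>
    mul_add_nonneg_of_zero_or_one _ _ (hε j)).1 hsum j (Finset.mem_univ j)
  rcases mul_eq_zero.1 hj with h | h
  · exact .inl h
  · rcases hε j with h' | h' <;> omega

theorem sum_sq_le_formC4 (v : ι → ℝ) : ∑ j, v j ^ 2 ≤ formC4 v :=
  le_add_of_nonneg_right (sq_nonneg _)

omit [Fintype ι] in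
theorem halfShift_neg_sub (ε N : ι → ℤ) : halfShift ε (-N - ε) = -halfShift ε N := by
  ext j
  simp only [halfShift, Pi.sub_apply, Pi.neg_apply, Int.cast_sub, Int.cast_neg]
  ring

variable [DecidableEq ι]

def minimizers (ε : ι → ℤ) : Finset (ι → ℤ) :=
  (Fintype.piFinset fun _ => ({-1, 0} : Finset ℤ)).filter fun N => formC4Int ε N = minFormC4Int ε

theorem mem_minimizers {ε N : ι → ℤ}
    (hε : ∀ j, ε j = 0 ∨ ε j = 1) : N ∈ minimizers ε ↔ formC4Int ε N = minFormC4Int ε := by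
  refine ⟨fun h => (Finset.mem_filter.1 h).2, fun h => Finset.mem_filter.2 ⟨?_, h⟩⟩
  refine Fintype.mem_piFinset.2 fun j => ?_
  rcases eq_zero_or_eq_neg_one_of_formC4Int_eq ε N hε h j with h | h <;> simp [h]

end Form

section Phase

variable {ι : Type*} [Fintype ι]

noncomputable def imBound (R : Matrix ι ι ℂ) : ℝ := ∑ j, ∑ k, |(R j k).im|

theorem imBound_nonneg (R : Matrix ι ι ℂ) : 0 ≤ imBound R :=
  Finset.sum_nonneg fun _ _ => Finset.sum_nonneg fun _ _ => abs_nonneg _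

noncomputable def phase (R : Matrix ι ι ℂ) (δ : ι → ℤ) (v : ι → ℝ) : ℂ :=
  cexp (π * I * (∑ j, ∑ k, (v j : ℂ) * R j k * v k + ∑ j, (v j : ℂ) * δ j))

theorem phase_ne_zero (R : Matrix ι ι ℂ) (δ : ι → ℤ) (v : ι → ℝ) :
    phase R δ v ≠ 0 :=
  exp_ne_zero _

theorem phase_eq_mul (R : Matrix ι ι ℂ) (δ : ι → ℤ) (v : ι → ℝ) :
    phase R δ v = phase R 0 v * cexp (π * I * ∑ j, (v j : ℂ) * δ j) := by
  simp only [phase, Pi.zero_apply, Int.cast_zero, mul_zero, Finset.sum_const_zero, add_zero,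
    ← Complex.exp_add, mul_add]

theorem norm_phase_le (R : Matrix ι ι ℂ) (δ : ι → ℤ) (v : ι → ℝ) :
    ‖phase R δ v‖ ≤ Real.exp (π * imBound R * ∑ j, v j ^ 2) := by
  have him : (∑ j, ∑ k, (v j : ℂ) * R j k * v k + ∑ j, (v j : ℂ) * δ j).im =
      ∑ j, ∑ k, v j * (R j k).im * v k := by
    simp [Complex.im_sum, Complex.mul_im]
  have hre (w : ℂ) : (π * I * w).re = -(π * w.im) := by simp [mul_re]
  rw [phase, norm_exp, Real.exp_le_exp, hre, him, mul_assoc, neg_le, ← mul_neg]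
  gcongr
  exact neg_le_of_abs_le (abs_sum_mul_mul_le _ v)

theorem phase_neg_halfShift (R : Matrix ι ι ℂ) {ε δ : ι → ℤ} (h : Even (∑ j, ε j * δ j))
    (N : ι → ℤ) : phase R δ (-halfShift ε N) = phase R δ (halfShift ε N) := by
  obtain ⟨k, hk⟩ := h
  have hsum : ∑ j, (halfShift ε N j : ℂ) * δ j =
      ∑ j, (N j : ℂ) * δ j + (∑ j, (ε j : ℂ) * δ j) / 2 := by
    simp only [halfShift, Finset.sum_div, ← Finset.sum_add_distrib]
    push_cast
    exact Finset.sum_congr rfl fun j _ => by ring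
  have hk' : ∑ j, (ε j : ℂ) * δ j = k + k := by exact_mod_cast hk
  rw [phase, phase, ← mul_one (cexp _), ← exp_int_mul_two_pi_mul_I (∑ j, N j * δ j + k),
    ← Complex.exp_add]
  congr 1
  simp only [Pi.neg_apply, ofReal_neg, neg_mul, mul_neg, neg_neg, Finset.sum_neg_distrib]
  push_cast
  linear_combination (-(2 * π * I) : ℂ) * hsum - (π * I : ℂ) * hk'

end Phase

theorem summable_exp_mul_norm_phase {n : ℕ} (R : Matrix (Fin n) (Fin n) ℂ) (ε δ : Fin n → ℤ) :
    Summable fun N : Fin n → ℤ => Real.exp (-((imBound R + 1) * (π * formC4 (halfShift ε N)))) *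
      ‖phase R δ (halfShift ε N)‖ := by
  refine (summable_prod_fin (fun j (m : ℤ) => Real.exp (-(π * (m + ε j / 2) ^ 2)))
    (fun _ _ => (Real.exp_pos _).le) (fun j => summable_exp_neg_pi_mul_add_sq _)).of_nonneg_of_le
    (fun N => by positivity) fun N => ?_
  set v := halfShift ε N
  have hK := imBound_nonneg R
  have hv := sum_sq_le_formC4 v
  calc Real.exp (-((imBound R + 1) * (π * formC4 v))) * ‖phase R δ v‖
      ≤ Real.exp (-((imBound R + 1) * (π * formC4 v))) *
          Real.exp (π * imBound R * ∑ j, v j ^ 2) := by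
        gcongr
        exact norm_phase_le R δ v
    _ ≤ Real.exp (∑ j, -(π * v j ^ 2)) := by
        rw [← Real.exp_add, Real.exp_le_exp, Finset.sum_neg_distrib, ← Finset.mul_sum]
        nlinarith [Real.pi_pos, mul_le_mul_of_nonneg_left hv (mul_nonneg Real.pi_pos.le hK)]
    _ = ∏ j, Real.exp (-(π * (N j + ε j / 2) ^ 2)) := Real.exp_sum _ _

theorem EC4_isSymm : EC4.IsSymm := by
  ext j k; fin_cases j <;> fin_cases k <;> rfl

theorem sum_mul_EC4_mul (v : Fin 3 → ℂ) :
    ∑ j, ∑ k, v j * EC4 j k * v k = ∑ j, v j ^ 2 + (∑ j, v j) ^ 2 := by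
  simp only [EC4, of_apply, cons_val', cons_val_fin_one, Fin.sum_univ_three, cons_val_zero,
    cons_val_one, cons_val, mul_one]
  ring

theorem sum_mul_re_EC4_mul (x : Fin 3 → ℝ) : ∑ j, ∑ k, x j * (EC4 j k).re * x k = formC4 x := by
  simp only [EC4, of_apply, cons_val', cons_val_fin_one, Fin.sum_univ_three, cons_val_zero,
    cons_val_one, cons_val, re_ofNat, one_re, mul_one, formC4]
  ring

theorem eventually_siegelUpper_EC4 (R : Matrix (Fin 3) (Fin 3) ℂ) (hR : R.IsSymm) :
    ∀ᶠ y : ℝ in atTop, SiegelUpper 3 ((I * y) • EC4 + R) := by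
  filter_upwards [eventually_gt_atTop (imBound R)] with y hy
  have hτ : ((I * y) • EC4 + R).IsSymm := (EC4_isSymm.smul _).add hR
  refine ⟨hτ, posDef_iff_dotProduct_mulVec.2
    ⟨isHermitian_iff_isSymm.2 (hτ.map Complex.im), fun x hx => ?_⟩⟩
  have hform : star x ⬝ᵥ (Matrix.of (fun j k => (((I * y) • EC4 + R) j k).im) *ᵥ x) =
      y * formC4 x + ∑ j, ∑ k, x j * (R j k).im * x k := by
    simp only [dotProduct, mulVec, star_trivial, of_apply, Finset.mul_sum, ← sum_mul_re_EC4_mul,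
      ← Finset.sum_add_distrib]
    refine Finset.sum_congr rfl fun j _ => Finset.sum_congr rfl fun k _ => ?_
    simp only [Matrix.add_apply, Matrix.smul_apply, smul_eq_mul, add_im, mul_im, mul_re, I_re,
      ofReal_re, zero_mul, I_im, ofReal_im, mul_zero, sub_self, one_mul, zero_add]
    ring
  have hpos : 0 < ∑ j, x j ^ 2 := by
    obtain ⟨j, hj⟩ := Function.ne_iff.1 hx
    exact Finset.sum_pos' (fun i _ => sq_nonneg (x i)) ⟨j, Finset.mem_univ j, sq_pos_of_ne_zero hj⟩
  have him : -(imBound R * ∑ j, x j ^ 2) ≤ ∑ j, ∑ k, x j * (R j k).im * x k :=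
    neg_le_of_abs_le (abs_sum_mul_mul_le _ x)
  have hy0 : 0 ≤ y := (imBound_nonneg R).trans hy.le
  rw [hform]
  nlinarith [mul_le_mul_of_nonneg_left (sum_sq_le_formC4 x) hy0, mul_lt_mul_of_pos_right hy hpos]

theorem theta_EC4_eq_tsum (R : Matrix (Fin 3) (Fin 3) ℂ) (ε δ : Fin 3 → ℤ) (y : ℝ) :
    theta 3 ε δ ((I * y) • EC4 + R) 0 =
      ∑' N, (Real.exp (-(y * (π * formC4 (halfShift ε N)))) : ℂ) * phase R δ (halfShift ε N) := by
  refine tsum_congr fun N => ?_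
  set v : Fin 3 → ℂ := fun j => (N j : ℂ) + (ε j : ℂ) / 2
  have hv (j : Fin 3) : (halfShift ε N j : ℂ) = v j := by simp [halfShift, v]
  have hτ : ∑ j, ∑ k, v j * ((I * y) • EC4 + R) j k * v k =
      I * y * (∑ j, v j ^ 2 + (∑ j, v j) ^ 2) + ∑ j, ∑ k, v j * R j k * v k := by
    simp only [Matrix.add_apply, Matrix.smul_apply, smul_eq_mul, ← sum_mul_EC4_mul,
      Finset.mul_sum, ← Finset.sum_add_distrib]
    exact Finset.sum_congr rfl fun j _ => Finset.sum_congr rfl fun k _ => by ring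
  have hδ : 2 * π * I * ∑ j, v j * ((0 : Fin 3 → ℂ) j + δ j / 2) =
      π * I * ∑ j, v j * δ j := by
    simp only [Finset.mul_sum, Pi.zero_apply, zero_add]
    exact Finset.sum_congr rfl fun j _ => by ring
  rw [phase, ofReal_exp, ← Complex.exp_add, formC4, hτ, hδ]
  push_cast
  simp only [hv]
  congr 1
  linear_combination (π : ℂ) * y * (∑ j, v j ^ 2 + (∑ j, v j) ^ 2) * I_sq

theorem tendsto_exp_mul_theta_EC4 (R : Matrix (Fin 3) (Fin 3) ℂ) (ε δ : Fin 3 → ℤ)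
    (hε : ∀ j, ε j = 0 ∨ ε j = 1) :
    Tendsto (fun y : ℝ => (Real.exp (y * (π / 4 * minFormC4Int ε)) : ℂ) *
        theta 3 ε δ ((I * y) • EC4 + R) 0) atTop
      (𝓝 (∑ N ∈ minimizers ε, phase R δ (halfShift ε N))) := by
  have hq (N : Fin 3 → ℤ) : π * formC4 (halfShift ε N) = π / 4 * formC4Int ε N := by
    rw [formC4Int_cast]; ring
  have hle (N : Fin 3 → ℤ) : π / 4 * minFormC4Int ε ≤ π * formC4 (halfShift ε N) := by
    rw [hq]; gcongr; exact_mod_cast minFormC4Int_le ε N hε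
  have hlim := tendsto_exp_mul_tsum_of_forall_le (fun N => phase R δ (halfShift ε N)) _ hle
    (summable_exp_mul_norm_phase R ε δ)
  simp_rw [theta_EC4_eq_tsum]
  convert hlim using 2
  rw [tsum_eq_sum (s := minimizers ε)]
  · refine Finset.sum_congr rfl fun N hN => (if_pos ?_).symm
    rw [hq, (mem_minimizers hε).1 hN]
  · intro N hN
    refine if_neg ?_
    rwa [hq, mul_right_inj' (by positivity), Int.cast_inj, ← mem_minimizers hε]

abbrev ThetaChar := (Fin 3 → Fin 2) × (Fin 3 → Fin 2)

def evenChars : Finset ThetaChar :=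
  Finset.univ.filter fun c => (∑ j, (c.1 j).val * (c.2 j).val) % 2 = 0

def castChar (a : Fin 3 → Fin 2) (j : Fin 3) : ℤ := (a j).val

theorem castChar_eq_zero_or_one (a : Fin 3 → Fin 2) (j : Fin 3) :
    castChar a j = 0 ∨ castChar a j = 1 := by
  rcases Fin.exists_fin_two.1 ⟨a j, rfl⟩ with h | h <;> simp [castChar, h]

noncomputable def charLimit (R : Matrix (Fin 3) (Fin 3) ℂ) (c : ThetaChar) : ℂ :=
  ∑ N ∈ minimizers (castChar c.1), phase R (castChar c.2) (halfShift (castChar c.1) N)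

noncomputable def thetaNullLimit (R : Matrix (Fin 3) (Fin 3) ℂ) : ℂ :=
  ∏ c ∈ evenChars, charLimit R c

theorem sum_minFormC4Int_evenChars : ∑ c ∈ evenChars, minFormC4Int (castChar c.1) = 64 := by
  decide

theorem tendsto_exp_mul_thetaNull3 (R : Matrix (Fin 3) (Fin 3) ℂ) :
    Tendsto (fun y : ℝ => (Real.exp (16 * π * y) : ℂ) * thetaNull3 ((I * y) • EC4 + R))
      atTop (𝓝 (thetaNullLimit R)) := by
  refine (tendsto_finsetProd evenChars fun c _ => tendsto_exp_mul_theta_EC4 R (castChar c.1)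
    (castChar c.2) (castChar_eq_zero_or_one c.1)).congr fun y => ?_
  have hexp : ∏ c ∈ evenChars, (Real.exp (y * (π / 4 * minFormC4Int (castChar c.1))) : ℂ) =
      Real.exp (16 * π * y) := by
    rw [← ofReal_prod, ← Real.exp_sum, ← Finset.mul_sum, ← Finset.mul_sum, ← Int.cast_sum,
      sum_minFormC4Int_evenChars]
    congr 2
    push_cast
    ring
  rw [Finset.prod_mul_distrib, hexp]
  rfl

theorem even_of_mem_evenChars {c : ThetaChar} (hc : c ∈ evenChars) :
    Even (∑ j, castChar c.1 j * castChar c.2 j) := by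
  have h := (Finset.mem_filter.1 hc).2
  have : ∑ j, castChar c.1 j * castChar c.2 j = ((∑ j, (c.1 j).val * (c.2 j).val : ℕ) : ℤ) := by
    simp [castChar]
  rw [this, Int.even_coe_nat, Nat.even_iff]
  exact h

theorem exists_minimizers_eq_pair : ∀ ε : Fin 3 → Fin 2, ε ≠ ![1, 1, 1] →
    ∃ N ∈ minimizers (castChar ε), minimizers (castChar ε) = {N, -N - castChar ε} := by
  decide

theorem minimizers_one_one_one : minimizers (castChar ![1, 1, 1]) =
    {![0, 0, -1], ![-1, -1, 0], ![0, -1, 0], ![-1, 0, -1], ![-1, 0, 0], ![0, -1, -1]} := by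
  decide

theorem phase_halfShift_neg_sub (R : Matrix (Fin 3) (Fin 3) ℂ) {c : ThetaChar} (hc : c ∈ evenChars)
    (N : Fin 3 → ℤ) :
    phase R (castChar c.2) (halfShift (castChar c.1) (-N - castChar c.1)) =
      phase R (castChar c.2) (halfShift (castChar c.1) N) := by
  rw [halfShift_neg_sub, phase_neg_halfShift R (even_of_mem_evenChars hc)]

theorem charLimit_ne_zero (R : Matrix (Fin 3) (Fin 3) ℂ) {c : ThetaChar} (hc : c ∈ evenChars)
    (h1 : c.1 ≠ ![1, 1, 1]) : charLimit R c ≠ 0 := by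
  obtain ⟨N, -, hN⟩ := exists_minimizers_eq_pair c.1 h1
  rw [charLimit, hN]
  by_cases hNN : N = -N - castChar c.1
  · rw [← hNN, Finset.pair_eq_singleton, Finset.sum_singleton]
    exact phase_ne_zero _ _ _
  · rw [Finset.sum_pair hNN, phase_halfShift_neg_sub R hc, ← two_mul]
    exact mul_ne_zero two_ne_zero (phase_ne_zero _ _ _)

theorem charLimit_one_one_one (R : Matrix (Fin 3) (Fin 3) ℂ) {δ : Fin 3 → Fin 2}
    (hδ : (![1, 1, 1], δ) ∈ evenChars) :
    charLimit R (![1, 1, 1], δ) = 2 *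
      (phase R (castChar δ) ![1 / 2, 1 / 2, -1 / 2] + phase R (castChar δ) ![1 / 2, -1 / 2, 1 / 2] +
        phase R (castChar δ) ![-1 / 2, 1 / 2, 1 / 2]) := by
  have hrefl := phase_halfShift_neg_sub R hδ
  have h1 : (![-1, -1, 0] : Fin 3 → ℤ) = -![0, 0, -1] - castChar ![1, 1, 1] := by decide
  have h2 : (![-1, 0, -1] : Fin 3 → ℤ) = -![0, -1, 0] - castChar ![1, 1, 1] := by decide
  have h3 : (![0, -1, -1] : Fin 3 → ℤ) = -![-1, 0, 0] - castChar ![1, 1, 1] := by decide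
  have ha : halfShift (castChar ![1, 1, 1]) ![0, 0, -1] = ![1 / 2, 1 / 2, -1 / 2] := by
    ext j; fin_cases j <;> norm_num [halfShift, castChar]
  have hb : halfShift (castChar ![1, 1, 1]) ![0, -1, 0] = ![1 / 2, -1 / 2, 1 / 2] := by
    ext j; fin_cases j <;> norm_num [halfShift, castChar]
  have hc : halfShift (castChar ![1, 1, 1]) ![-1, 0, 0] = ![-1 / 2, 1 / 2, 1 / 2] := by
    ext j; fin_cases j <;> norm_num [halfShift, castChar]
  rw [charLimit, minimizers_one_one_one]
  rw [Finset.sum_insert (by decide), Finset.sum_insert (by decide), Finset.sum_insert (by decide),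
    Finset.sum_insert (by decide), Finset.sum_pair (by decide)]
  simp only [h1, h2, h3, hrefl]
  rw [ha, hb, hc]
  ring

theorem phase_zero_eq_mul_St1 (R : Matrix (Fin 3) (Fin 3) ℂ) (hR : R.IsSymm) :
    phase R 0 ![1 / 2, 1 / 2, -1 / 2] = phase R 0 ![-1 / 2, 1 / 2, 1 / 2] * St1 R := by
  rw [phase, phase, St1, ← Complex.exp_add]
  congr 1
  simp only [Fin.sum_univ_three, cons_val_zero, cons_val_one, cons_val, ofReal_div, ofReal_neg,
    ofReal_one, ofReal_ofNat, hR.apply 1 0, hR.apply 2 0, hR.apply 2 1, Pi.zero_apply,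
    Int.cast_zero, mul_zero, Finset.sum_const_zero, add_zero]
  ring

theorem phase_zero_eq_mul_St2 (R : Matrix (Fin 3) (Fin 3) ℂ) (hR : R.IsSymm) :
    phase R 0 ![1 / 2, -1 / 2, 1 / 2] = phase R 0 ![-1 / 2, 1 / 2, 1 / 2] * St2 R := by
  rw [phase, phase, St2, ← Complex.exp_add]
  congr 1
  simp only [Fin.sum_univ_three, cons_val_zero, cons_val_one, cons_val, ofReal_div, ofReal_neg,
    ofReal_one, ofReal_ofNat, hR.apply 1 0, hR.apply 2 0, hR.apply 2 1, Pi.zero_apply,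
    Int.cast_zero, mul_zero, Finset.sum_const_zero, add_zero]
  ring

theorem evenChars_filter_one_one_one :
    evenChars.filter (fun c => c.1 = ![1, 1, 1]) =
      {(![1, 1, 1], ![0, 0, 0]), (![1, 1, 1], ![1, 1, 0]), (![1, 1, 1], ![1, 0, 1]),
        (![1, 1, 1], ![0, 1, 1])} := by
  decide

theorem exists_thetaNullLimit_eq_mul (R : Matrix (Fin 3) (Fin 3) ℂ) (hR : R.IsSymm) :
    ∃ K ≠ 0, thetaNullLimit R = K *
      ((1 - St1 R - St2 R) * (St2 R - St1 R - 1) * (St1 R - St2 R - 1) * (St1 R + St2 R + 1)) := by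
  have hrest : ∏ c ∈ evenChars.filter (fun c => ¬c.1 = ![1, 1, 1]), charLimit R c ≠ 0 :=
    Finset.prod_ne_zero_iff.2 fun c hc =>
      charLimit_ne_zero R (Finset.mem_filter.1 hc).1 (Finset.mem_filter.1 hc).2
  refine ⟨-16 * phase R 0 ![-1 / 2, 1 / 2, 1 / 2] ^ 4 *
    ∏ c ∈ evenChars.filter (fun c => ¬c.1 = ![1, 1, 1]), charLimit R c,
    by simpa using ⟨phase_ne_zero _ _ _, hrest⟩, ?_⟩
  rw [thetaNullLimit,
    ← Finset.prod_filter_mul_prod_filter_not evenChars (fun c => c.1 = ![1, 1, 1]),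
    evenChars_filter_one_one_one]
  rw [Finset.prod_insert (by decide), Finset.prod_insert (by decide), Finset.prod_pair (by decide)]
  rw [charLimit_one_one_one R (by decide), charLimit_one_one_one R (by decide),
    charLimit_one_one_one R (by decide), charLimit_one_one_one R (by decide)]
  simp only [phase_eq_mul R (castChar _), phase_zero_eq_mul_St1 R hR, phase_zero_eq_mul_St2 R hR]
  have h1 : (2⁻¹ + 2⁻¹ : ℂ) = 1 := by norm_num
  have h2 : (2⁻¹ + -1 / 2 : ℂ) = 0 := by norm_num
  have h3 : (-1 / 2 + 2⁻¹ : ℂ) = 0 := by norm_num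
  simp only [one_div, castChar, Fin.sum_univ_three, cons_val_zero, cons_val_one, cons_val,
    Int.cast_natCast, ofReal_inv, ofReal_ofNat, ofReal_div, ofReal_neg, ofReal_one,
    Fin.coe_ofNat_eq_mod, Nat.zero_mod, Nat.mod_succ, CharP.cast_eq_zero, Nat.cast_one, mul_zero,
    add_zero, zero_add, mul_one, h1, h2, h3, exp_zero, exp_pi_mul_I, mul_neg, neg_mul]
  ring

end ThetaNullC4

theorem stmt_10 (R : Matrix (Fin 3) (Fin 3) ℂ) (hR : R.IsSymm) :
    (∀ᶠ y : ℝ in Filter.atTop, SiegelUpper 3 ((I * (y : ℂ)) • EC4 + R)) ∧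
    ∃ L : ℂ,
      Filter.Tendsto
        (fun y : ℝ => (Real.exp (16 * Real.pi * y) : ℂ) *
          thetaNull3 ((I * (y : ℂ)) • EC4 + R))
        Filter.atTop (nhds L) ∧
      (L = 0 ↔
        (1 - St1 R - St2 R) * (St2 R - St1 R - 1) * (St1 R - St2 R - 1) *
          (St1 R + St2 R + 1) = 0) := by
  obtain ⟨K, hK, hL⟩ := ThetaNullC4.exists_thetaNullLimit_eq_mul R hR
  refine ⟨ThetaNullC4.eventually_siegelUpper_EC4 R hR, ThetaNullC4.thetaNullLimit R,
    ThetaNullC4.tendsto_exp_mul_thetaNull3 R, ?_⟩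
  rw [hL, mul_eq_zero, or_iff_right hK]
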